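/- arXiv:1107.4353 — 3 statements merged into one kernel-verified Lean document; each statement's English description precedes it below -/
import Mathlib

section
/- Let $I_1, I_2, \ldots$ be i.i.d. $\mathbb{N}^{*}$-valued random variables with $\mathbb{P}(I_1 = k) \le C_r r^{k}$ for all $k\ge 1$, where $r\in(0,1)$ and $C_r>0$. Set $T_k = I_1+\cdots+I_k$. Then for every $n\ge 1$, $\sum_{k=1}^{n} \mathbb{P}(T_k = n) \le \frac{1}{C_r}(e^{C_r} r)^{n}$. In particular, if $C_r < \ln(1/r)$, this quantity decreases exponentially fast in $n$. -/
open MeasureTheory ProbabilityTheory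

lemma hockey (n k : ℕ) : ∑ i ∈ Finset.range n, i.choose k = n.choose (k+1) := by
  induction n with
  | zero => simp
  | succ n ih => rw [Finset.sum_range_succ, ih, Nat.choose_succ_succ' n k]; ring

lemma sq_le_exp' {C : ℝ} (hC : 0 ≤ C) : C^2 ≤ Real.exp C := by
  have h1 : C ≤ (1 + C/4)^2 := by nlinarith [sq_nonneg (1 - C/4)]
  have h2 : (1 + C/4) ≤ Real.exp (C/4) := by
    have := Real.add_one_le_exp (C/4); linarith
  have h3 : (1 + C/4)^2 ≤ Real.exp (C/4)^2 :=
    pow_le_pow_left₀ (by linarith) h2 2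
  have h5 : C^2 ≤ (Real.exp (C/4)^2)^2 := pow_le_pow_left₀ hC (h1.trans h3) 2
  have h6 : (Real.exp (C/4)^2)^2 = Real.exp C := by
    rw [← pow_mul, ← Real.exp_nat_mul]
    norm_num
    ring
  linarith [h6 ▸ h5]

/-- if `I₁, I₂, …` are i.i.d. positive-integer-valued random variables with
`ℙ(I₁ = k) ≤ C r^k` for all `k ≥ 1` (`r ∈ (0,1)`, `C > 0`) and `T_k = I₁ + ⋯ + I_k`, then
`∑_{k=1}^n ℙ(T_k = n) ≤ (1/C)(e^C r)^n`. -/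
theorem stmt5 {Ω : Type*} [MeasurableSpace Ω] (μ : Measure Ω) [IsProbabilityMeasure μ]
    (I : ℕ → Ω → ℕ) (hmeas : ∀ m, Measurable (I m))
    (hindep : iIndepFun I μ)
    (hident : ∀ m, IdentDistrib (I m) (I 0) μ μ)
    (hpos : ∀ m ω, 1 ≤ I m ω)
    (r C : ℝ) (hr : r ∈ Set.Ioo (0 : ℝ) 1) (hC : 0 < C)
    (htail : ∀ k : ℕ, 1 ≤ k → (μ {ω | I 0 ω = k}).toReal ≤ C * r ^ k)
    (n : ℕ) (hn : 1 ≤ n) :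
    ∑ k ∈ Finset.Icc 1 n, (μ {ω | ∑ l ∈ Finset.range k, I l ω = n}).toReal ≤
      (1 / C) * (Real.exp C * r) ^ n := by
  obtain ⟨hr0, hr1⟩ := hr
  have hTge : ∀ k ω, k ≤ ∑ l ∈ Finset.range k, I l ω := by
    intro k ω
    calc k = ∑ _l ∈ Finset.range k, 1 := by simp
    _ ≤ _ := Finset.sum_le_sum fun l _ => hpos l ω
  have hA0 : ∀ k m : ℕ, m < k → μ {ω | ∑ l ∈ Finset.range k, I l ω = m} = 0 := by
    intro k m hmk
    convert measure_empty
    · ext ω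
      simp only [Set.mem_setOf_eq, Set.mem_empty_iff_false, iff_false]
      intro h
      have := hTge k ω
      omega
    · infer_instance
  have hp : ∀ j m : ℕ, 1 ≤ m → (μ {ω | I j ω = m}).toReal ≤ C * r ^ m := by
    intro j m hm
    have h : μ {ω | I j ω = m} = μ {ω | I 0 ω = m} := by
      have := (hident j).measure_mem_eq (measurableSet_singleton m)
      simpa [Set.preimage] using this
    rw [h]; exact htail m hm
  -- main induction
  have key : ∀ k m : ℕ, (μ {ω | ∑ l ∈ Finset.range (k+1), I l ω = m}).toReal
      ≤ C ^ (k+1) * r ^ m * ((m-1).choose k) := by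
    intro k
    induction k with
    | zero =>
      intro m
      rcases Nat.eq_zero_or_pos m with hm | hm
      · subst hm
        rw [hA0 1 0 one_pos]
        simp only [ENNReal.toReal_zero]
        positivity
      · have h1 : {ω | ∑ l ∈ Finset.range 1, I l ω = m} = {ω | I 0 ω = m} := by
          ext ω; simp
        rw [h1]
        have h := hp 0 m hm
        calc (μ {ω | I 0 ω = m}).toReal ≤ C * r ^ m := h
        _ = C ^ (0+1) * r ^ m * ((m-1).choose 0) := by simp
    | succ k ih =>
      intro m
      rcases Nat.eq_zero_or_pos m with hm | hm
      · subst hm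
        rw [hA0 (k+2) 0 (by omega)]
        simp only [ENNReal.toReal_zero]
        positivity
      · -- decomposition over the value j of the first k+1 terms
        have hsub : {ω | ∑ l ∈ Finset.range (k+2), I l ω = m} ⊆
            ⋃ j ∈ Finset.Icc 1 (m-1),
              ({ω | ∑ l ∈ Finset.range (k+1), I l ω = j} ∩ {ω | I (k+1) ω = m - j}) := by
          intro ω hω
          simp only [Set.mem_setOf_eq] at hω
          rw [Finset.sum_range_succ] at hω
          have h1 := hTge (k+1) ω
          have h2 := hpos (k+1) ω
          simp only [Set.mem_iUnion, Finset.mem_Icc, exists_prop]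
          exact ⟨∑ l ∈ Finset.range (k+1), I l ω, ⟨by omega, by omega⟩,
            rfl, by simp only [Set.mem_setOf_eq]; omega⟩
        have hterm : ∀ j : ℕ,
            μ ({ω | ∑ l ∈ Finset.range (k+1), I l ω = j} ∩ {ω | I (k+1) ω = m - j})
            = μ {ω | ∑ l ∈ Finset.range (k+1), I l ω = j} * μ {ω | I (k+1) ω = m - j} := by
          intro j
          have hind : IndepFun (∑ l ∈ Finset.range (k+1), I l) (I (k+1)) μ :=
            hindep.indepFun_finsetSum_of_notMem hmeas Finset.notMem_range_self
          have h := hind.measure_inter_preimage_eq_mul {j} {m - j}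
            (measurableSet_singleton _) (measurableSet_singleton _)
          simpa [Set.preimage, Finset.sum_apply] using h
        have h3 : (μ {ω | ∑ l ∈ Finset.range (k+2), I l ω = m}).toReal ≤
            ∑ j ∈ Finset.Icc 1 (m-1),
              (μ {ω | ∑ l ∈ Finset.range (k+1), I l ω = j}).toReal *
              (μ {ω | I (k+1) ω = m - j}).toReal := by
          have hle : μ {ω | ∑ l ∈ Finset.range (k+2), I l ω = m} ≤
              ∑ j ∈ Finset.Icc 1 (m-1),
                μ ({ω | ∑ l ∈ Finset.range (k+1), I l ω = j} ∩ {ω | I (k+1) ω = m - j}) :=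
            (measure_mono hsub).trans (measure_biUnion_finset_le _ _)
          have hfin : (∑ j ∈ Finset.Icc 1 (m-1),
              μ ({ω | ∑ l ∈ Finset.range (k+1), I l ω = j} ∩ {ω | I (k+1) ω = m - j})) ≠ ⊤ :=
            (ENNReal.sum_lt_top.mpr fun j _ => measure_lt_top μ _).ne
          calc (μ {ω | ∑ l ∈ Finset.range (k+2), I l ω = m}).toReal
              ≤ (∑ j ∈ Finset.Icc 1 (m-1),
                μ ({ω | ∑ l ∈ Finset.range (k+1), I l ω = j} ∩ {ω | I (k+1) ω = m - j})).toReal :=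
                ENNReal.toReal_mono hfin hle
          _ = ∑ j ∈ Finset.Icc 1 (m-1),
                (μ ({ω | ∑ l ∈ Finset.range (k+1), I l ω = j} ∩ {ω | I (k+1) ω = m - j})).toReal :=
                ENNReal.toReal_sum fun j _ => measure_ne_top μ _
          _ = _ := by
                refine Finset.sum_congr rfl fun j _ => ?_
                rw [hterm j, ENNReal.toReal_mul]
        refine h3.trans ?_
        have h4 : ∑ j ∈ Finset.Icc 1 (m-1),
              (μ {ω | ∑ l ∈ Finset.range (k+1), I l ω = j}).toReal *
              (μ {ω | I (k+1) ω = m - j}).toReal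
            ≤ ∑ j ∈ Finset.Icc 1 (m-1), C ^ (k+2) * r ^ m * ((j-1).choose k) := by
          refine Finset.sum_le_sum fun j hj => ?_
          simp only [Finset.mem_Icc] at hj
          have hb : (μ {ω | ∑ l ∈ Finset.range (k+1), I l ω = j}).toReal *
              (μ {ω | I (k+1) ω = m - j}).toReal
              ≤ (C ^ (k+1) * r ^ j * ((j-1).choose k)) * (C * r ^ (m-j)) :=
            mul_le_mul (ih j) (hp (k+1) (m-j) (by omega)) ENNReal.toReal_nonneg (by positivity)
          refine hb.trans_eq ?_
          have hrr : r ^ j * r ^ (m - j) = r ^ m := by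
            rw [← pow_add]; congr 1; omega
          calc (C ^ (k+1) * r ^ j * ((j-1).choose k)) * (C * r ^ (m-j))
              = C ^ (k+2) * (r ^ j * r ^ (m-j)) * ((j-1).choose k) := by ring
          _ = C ^ (k+2) * r ^ m * ((j-1).choose k) := by rw [hrr]
        refine h4.trans ?_
        have h5 : ∑ j ∈ Finset.Icc 1 (m-1), (((j-1).choose k : ℝ))
            = ((m-1).choose (k+1) : ℝ) := by
          rw [← Finset.Ico_add_one_right_eq_Icc, Finset.sum_Ico_eq_sum_range]
          have hcg : ∀ i ∈ Finset.range (m-1+1-1), (((1+i-1).choose k : ℝ)) = ((i.choose k : ℝ)) := by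
            intro i _
            congr 2
            omega
          rw [Finset.sum_congr rfl hcg]
          have h6 : m - 1 + 1 - 1 = m - 1 := by omega
          rw [h6]
          exact_mod_cast congrArg (Nat.cast (R := ℝ)) (hockey (m-1) k)
        have h7 : ∑ j ∈ Finset.Icc 1 (m-1), C ^ (k+2) * r ^ m * (((j-1).choose k : ℝ))
            = C ^ (k+1+1) * r ^ m * ((m-1).choose (k+1)) := by
          rw [← Finset.mul_sum, h5]
        exact h7.le
  -- now sum over k
  obtain ⟨n', rfl⟩ : ∃ n', n = n' + 1 := ⟨n - 1, by omega⟩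
  have hsum : ∑ k ∈ Finset.Icc 1 (n'+1), (μ {ω | ∑ l ∈ Finset.range k, I l ω = n'+1}).toReal
      ≤ ∑ i ∈ Finset.range (n'+1), C ^ (i+1) * r ^ (n'+1) * ((n'+1-1).choose i) := by
    rw [← Finset.Ico_add_one_right_eq_Icc, Finset.sum_Ico_eq_sum_range]
    have h6 : n' + 1 + 1 - 1 = n' + 1 := by omega
    rw [h6]
    refine Finset.sum_le_sum fun i _ => ?_
    have h8 := key i (n'+1)
    have h7 : 1 + i = i + 1 := by omega
    rw [h7]
    exact h8
  refine hsum.trans ?_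
  have h9 : n' + 1 - 1 = n' := by omega
  rw [h9]
  have hbinom : ∑ i ∈ Finset.range (n'+1), C ^ (i+1) * r ^ (n'+1) * ((n').choose i)
      = r ^ (n'+1) * (C * (C + 1) ^ n') := by
    have hC1 : (C + 1) ^ n' = ∑ i ∈ Finset.range (n'+1), C ^ i * 1 ^ (n'-i) * ((n').choose i) :=
      add_pow C 1 n'
    rw [hC1, Finset.mul_sum, Finset.mul_sum]
    refine Finset.sum_congr rfl fun i _ => ?_
    simp only [one_pow]
    ring
  rw [hbinom]
  -- final numeric bound
  have hfin : C * (C + 1) ^ n' ≤ (1 / C) * (Real.exp C) ^ (n'+1) := by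
    rw [one_div, ← div_eq_inv_mul, le_div_iff₀ hC]
    have h1 : C * (C + 1) ^ n' * C = C ^ 2 * (C + 1) ^ n' := by ring
    rw [h1]
    have h2 : (C + 1) ^ n' ≤ (Real.exp C) ^ n' :=
      pow_le_pow_left₀ (by linarith) (by have := Real.add_one_le_exp C; linarith) _
    have h3 : C ^ 2 * (C + 1) ^ n' ≤ Real.exp C * (Real.exp C) ^ n' :=
      mul_le_mul (sq_le_exp' hC.le) h2 (by positivity) (Real.exp_pos C).le
    refine h3.trans_eq ?_
    rw [← pow_succ']
  calc r ^ (n'+1) * (C * (C + 1) ^ n')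
      ≤ r ^ (n'+1) * ((1 / C) * (Real.exp C) ^ (n'+1)) :=
        mul_le_mul_of_nonneg_left hfin (by positivity)
  _ = (1 / C) * (Real.exp C * r) ^ (n'+1) := by rw [mul_pow]; ring
end

section
/- Let $\xi_1,\ldots,\xi_n$ be i.i.d. geometric random variables with parameter $\alpha\in(0,1)$, and let $C_{1,\alpha} = \frac{1-\alpha}{\alpha} + 4\left(\frac{1-\alpha}{\alpha}\right)^{2}$. Then for all $x>0$, $\mathbb{P}\left(\frac1n\sum_{i=1}^{n}\xi_i - \frac1\alpha < -x\right) \le \exp\left(-n\left(\frac{x^{2}}{2C_{1,\alpha}}\wedge \frac{x}{2}\right)\right)$. -/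
open MeasureTheory ProbabilityTheory

lemma exp_neg_le_quad {u : ℝ} (hu : 0 ≤ u) : Real.exp (-u) ≤ 1 - u + u ^ 2 / 2 := by
  have h1 : Real.exp u * Real.exp (-u) = 1 := by rw [← Real.exp_add]; simp
  have h2 := Real.quadratic_le_exp_of_nonneg hu
  have h3 := Real.exp_pos (-u)
  have h4 := mul_le_mul_of_nonneg_right h2 h3.le
  rw [h1] at h4
  nlinarith [sq_nonneg (u * u), sq_nonneg u]

lemma geom_series_bound {α lam : ℝ} (hα0 : 0 < α) (hα1 : α < 1) (hl : 0 ≤ lam) :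
    ∑' j : ℕ, (1 - α) ^ j * α * Real.exp (-lam * (j + 1)) ≤
      Real.exp (-(lam / α) + lam ^ 2 * ((1 - α) / α + 4 * ((1 - α) / α) ^ 2) / 2) := by
  have hβ0 : (0:ℝ) ≤ 1 - α := by linarith
  have hβ1 : (1:ℝ) - α < 1 := by linarith
  have hnorm : ‖(1 - α : ℝ)‖ < 1 := by rw [Real.norm_eq_abs, abs_of_nonneg hβ0]; exact hβ1
  have h1 : HasSum (fun n : ℕ => (1 - α) ^ n) (1 - (1-α))⁻¹ :=
    hasSum_geometric_of_lt_one hβ0 hβ1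
  have h2 : HasSum (fun n : ℕ => (n:ℝ) * (1 - α) ^ n) ((1-α) / (1 - (1-α)) ^ 2) :=
    hasSum_coe_mul_geometric_of_norm_lt_one hnorm
  have h3' := (hasSum_choose_mul_geometric_of_norm_lt_one 2 hnorm).mul_left 2
  have hc : ∀ n : ℕ, (2:ℝ) * (((n+2).choose 2 : ℕ) : ℝ) = ((n:ℝ)+1) * ((n:ℝ)+2) := by
    intro n
    have h2d : 2 ∣ (n+2) * (n+2-1) := by
      have := (Nat.even_mul_succ_self (n+1)).two_dvd
      simpa [Nat.mul_comm] using this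
    have hnn : 2 * ((n+2).choose 2) = (n+1) * (n+2) := by
      have e : n+2-1 = n+1 := by omega
      rw [Nat.choose_two_right, Nat.mul_div_cancel' h2d, e]; ring
    have := congrArg (fun m : ℕ => (m:ℝ)) hnn
    push_cast at this ⊢
    linarith
  have heq : (fun n : ℕ => (2:ℝ) * ((((n+2).choose 2 : ℕ):ℝ) * (1-α)^n))
      = fun n : ℕ => ((n:ℝ)+1) * ((n:ℝ)+2) * (1-α)^n := by
    funext n; rw [← mul_assoc, hc n]
  have h3 : HasSum (fun n : ℕ => ((n:ℝ)+1) * ((n:ℝ)+2) * (1-α)^n)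
      (2 * (1 / (1 - (1-α)) ^ 3)) := heq ▸ h3'
  -- combined HasSum for the majorant series
  have hcomb := (((h1.mul_left (1 - lam^2)).add (h2.mul_left (-lam - 3*lam^2/2))).add
      (h3.mul_left (lam^2/2))).mul_left (Real.exp (-lam) * α)
  have hfeq : (fun n : ℕ => Real.exp (-lam) * α *
        ((1 - lam^2) * (1-α)^n + (-lam - 3*lam^2/2) * ((n:ℝ) * (1-α)^n)
          + lam^2/2 * (((n:ℝ)+1) * ((n:ℝ)+2) * (1-α)^n)))
      = fun n : ℕ => Real.exp (-lam) * ((1-α)^n * α *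
        (1 - lam * (n:ℝ) + lam^2 * (n:ℝ)^2 / 2)) := by
    funext n; ring
  rw [hfeq] at hcomb
  set S := Real.exp (-lam) * α * ((1 - lam^2) * (1 - (1-α))⁻¹
      + (-lam - 3*lam^2/2) * ((1-α) / (1 - (1-α))^2) + lam^2/2 * (2 * (1 / (1 - (1-α))^3)))
    with hSdef
  -- pointwise bound
  have hpt : ∀ n : ℕ, (1 - α) ^ n * α * Real.exp (-lam * (n + 1)) ≤
      Real.exp (-lam) * ((1-α)^n * α * (1 - lam * (n:ℝ) + lam^2 * (n:ℝ)^2 / 2)) := by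
    intro n
    have hu : (0:ℝ) ≤ lam * n := by positivity
    have hq := exp_neg_le_quad hu
    have hsplit : Real.exp (-lam * (n + 1)) = Real.exp (-lam) * Real.exp (-(lam * n)) := by
      rw [← Real.exp_add]; ring_nf
    rw [hsplit]
    have hnn : (0:ℝ) ≤ (1 - α) ^ n * α := by positivity
    calc (1 - α) ^ n * α * (Real.exp (-lam) * Real.exp (-(lam * n)))
        ≤ (1 - α) ^ n * α * (Real.exp (-lam) * (1 - lam * n + (lam * n)^2 / 2)) := by
          have := mul_le_mul_of_nonneg_left hq (Real.exp_pos (-lam)).le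
          exact mul_le_mul_of_nonneg_left this hnn
      _ = Real.exp (-lam) * ((1-α)^n * α * (1 - lam * (n:ℝ) + lam^2 * (n:ℝ)^2 / 2)) := by ring
  -- nonnegativity of both sides
  have hgnn : ∀ n : ℕ, (0:ℝ) ≤ (1 - α) ^ n * α * Real.exp (-lam * (n + 1)) := by
    intro n; positivity
  have hsum_g : Summable (fun n : ℕ => (1 - α) ^ n * α * Real.exp (-lam * (n + 1))) :=
    Summable.of_nonneg_of_le hgnn hpt hcomb.summable
  have hle := Summable.tsum_le_tsum hpt hsum_g hcomb.summable
  rw [hcomb.tsum_eq] at hle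
  refine hle.trans ?_
  -- now bound S
  have hαne : α ≠ 0 := ne_of_gt hα0
  have hS2 : S = Real.exp (-lam) * (1 - lam * ((1-α)/α)
      + lam^2 * ((1-α)/α + 2 * ((1-α)/α)^2) / 2) := by
    rw [hSdef, sub_sub_cancel]; field_simp; ring
  have hy := Real.add_one_le_exp (-lam * ((1-α)/α) + lam^2 * ((1-α)/α + 2 * ((1-α)/α)^2) / 2)
  have hT : 1 - lam * ((1-α)/α) + lam^2 * ((1-α)/α + 2 * ((1-α)/α)^2) / 2 ≤
      Real.exp (-lam * ((1-α)/α) + lam^2 * ((1-α)/α + 2 * ((1-α)/α)^2) / 2) := by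
    linarith
  have hS3 : S ≤ Real.exp (-lam) *
      Real.exp (-lam * ((1-α)/α) + lam^2 * ((1-α)/α + 2 * ((1-α)/α)^2) / 2) := by
    rw [hS2]
    exact mul_le_mul_of_nonneg_left hT (Real.exp_pos _).le
  refine hS3.trans ?_
  rw [← Real.exp_add]
  apply Real.exp_le_exp.mpr
  have hq0 : (0:ℝ) ≤ (1-α)/α := by positivity
  have hlin : -lam + -lam * ((1-α)/α) = -(lam/α) := by field_simp; ring
  nlinarith [sq_nonneg lam, mul_nonneg (sq_nonneg lam) (sq_nonneg ((1-α)/α))]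

set_option maxHeartbeats 2000000 in
/-- lower deviation bound for sums of i.i.d. geometric random variables
(on `{1,2,…}`, parameter `α`): with `C₁ = (1-α)/α + 4((1-α)/α)²`, for all `x > 0`,
`ℙ((1/n) ∑ ξ_i - 1/α < -x) ≤ exp(-n min(x²/(2C₁), x/2))`. -/
theorem stmt16 {Ω : Type*} [MeasurableSpace Ω] (μ : Measure Ω) [IsProbabilityMeasure μ]
    (α : ℝ) (hα : α ∈ Set.Ioo (0 : ℝ) 1)
    (ξ : ℕ → Ω → ℕ) (hmeas : ∀ m, Measurable (ξ m))
    (hindep : iIndepFun ξ μ)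
    (hident : ∀ m, IdentDistrib (ξ m) (ξ 0) μ μ)
    (hdist : ∀ k : ℕ, 1 ≤ k → (μ {ω | ξ 0 ω = k}).toReal = (1 - α) ^ (k - 1) * α)
    (n : ℕ) (hn : 1 ≤ n) :
    ∀ x > (0 : ℝ),
      (μ {ω | (∑ i ∈ Finset.range n, (ξ i ω : ℝ)) / n - 1 / α < -x}).toReal ≤
        Real.exp (-(n * min
          (x ^ 2 / (2 * ((1 - α) / α + 4 * ((1 - α) / α) ^ 2)))
          (x / 2))) := by
  obtain ⟨hα0, hα1⟩ := hα
  intro x hx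
  have hαne : α ≠ 0 := ne_of_gt hα0
  set C : ℝ := (1 - α) / α + 4 * ((1 - α) / α) ^ 2 with hCdef
  have hq0 : 0 < (1 - α) / α := div_pos (by linarith) hα0
  have hC0 : 0 < C := by rw [hCdef]; nlinarith [sq_nonneg ((1-α)/α)]
  set lam : ℝ := min (x / C) 1 with hlamdef
  have hlam0 : 0 < lam := lt_min (div_pos hx hC0) one_pos
  have hlam1 : lam ≤ 1 := min_le_right _ _
  clear_value C lam
  -- real-valued variables
  set X : ℕ → Ω → ℝ := fun i ω => (ξ i ω : ℝ) with hX
  have hcast : Measurable (Nat.cast : ℕ → ℝ) := measurable_from_top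
  have hXmeas : ∀ i, Measurable (X i) := fun i => hcast.comp (hmeas i)
  have hXindep : iIndepFun X μ :=
    hindep.comp (fun _ => (Nat.cast : ℕ → ℝ)) fun _ => hcast
  have hmap : ∀ i, μ.map (ξ i) = μ.map (ξ 0) := fun i => (hident i).map_eq
  have hνprob : IsProbabilityMeasure (μ.map (ξ 0)) :=
    Measure.isProbabilityMeasure_map (hmeas 0).aemeasurable
  have hνk : ∀ k : ℕ, (μ.map (ξ 0)) {k} = μ {ω | ξ 0 ω = k} := by
    intro k
    rw [Measure.map_apply (hmeas 0) (measurableSet_singleton k)]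
    rfl
  -- mgf via pushforward
  have hmgf_int : ∀ (i : ℕ) (t : ℝ), mgf (X i) μ t = ∫ k : ℕ, Real.exp (t * k) ∂(μ.map (ξ 0)) := by
    intro i t
    rw [← hmap i,
      integral_map (hmeas i).aemeasurable measurable_from_top.aestronglyMeasurable]
    rfl
  -- total mass identity
  have htot : ∑' k : ℕ, (μ.map (ξ 0)) {k} = 1 := by
    have hdisj : Pairwise (Function.onFun Disjoint fun k : ℕ => ({k} : Set ℕ)) := by
      intro i j hij
      simpa [Function.onFun] using hij
    rw [← measure_iUnion hdisj fun k => measurableSet_singleton k,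
      Set.iUnion_of_singleton, measure_univ]
  have hsummReal : Summable (fun k : ℕ => ((μ.map (ξ 0)) {k}).toReal) := by
    apply ENNReal.summable_toReal
    rw [htot]; exact ENNReal.one_ne_top
  have hν0 : (μ.map (ξ 0)) {0} = 0 := by
    have h2 : ∀ k : ℕ, (μ.map (ξ 0)) {(k + 1 : ℕ)} = ENNReal.ofReal ((1 - α) ^ k * α) := by
      intro k
      rw [← ENNReal.ofReal_toReal (measure_ne_top (μ.map (ξ 0)) _)]
      congr 1
      rw [hνk, hdist (k+1) (by omega), Nat.add_sub_cancel]
    have hsumr : ∑' k : ℕ, (1 - α) ^ k * α = 1 := by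
      rw [tsum_mul_right, tsum_geometric_of_lt_one (by linarith) (by linarith)]
      field_simp
      rw [sub_sub_cancel, div_self hαne]
    have h3 : ∑' k : ℕ, (μ.map (ξ 0)) {(k + 1 : ℕ)} = 1 := by
      simp_rw [h2]
      rw [← ENNReal.ofReal_tsum_of_nonneg
        (fun k => mul_nonneg (pow_nonneg (by linarith) k) hα0.le)
        ((summable_geometric_of_lt_one (by linarith) (by linarith)).mul_right α),
        hsumr, ENNReal.ofReal_one]
    have h4 : ∑' k : ℕ, (μ.map (ξ 0)) {k}
        = (μ.map (ξ 0)) {0} + ∑' k : ℕ, (μ.map (ξ 0)) {(k + 1 : ℕ)} :=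
      tsum_eq_zero_add' ENNReal.summable
    rw [htot, h3] at h4
    have h5 : (μ.map (ξ 0)) {0} + 1 = 0 + 1 := by rw [zero_add]; exact h4.symm
    exact WithTop.add_right_cancel ENNReal.one_ne_top h5
  -- bound on single mgf
  have hmgf0 : mgf (X 0) μ (-lam) ≤ Real.exp (-(lam/α) + lam^2 * C / 2) := by
    rw [hmgf_int 0 (-lam)]
    have hint : Integrable (fun k : ℕ => Real.exp (-lam * k)) (μ.map (ξ 0)) := by
      refine Integrable.mono' (integrable_const 1)
        measurable_from_top.aestronglyMeasurable ?_
      refine Filter.Eventually.of_forall fun k => ?_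
      rw [Real.norm_eq_abs, abs_of_pos (Real.exp_pos _)]
      exact Real.exp_le_one_iff.mpr (mul_nonpos_of_nonpos_of_nonneg (by linarith) (by positivity))
    rw [MeasureTheory.integral_countable' hint]
    simp only [Measure.real]
    have hptle : ∀ k : ℕ, ((μ.map (ξ 0)) {k}).toReal • Real.exp (-lam * k)
        ≤ ((μ.map (ξ 0)) {k}).toReal := by
      intro k
      rw [smul_eq_mul]
      nth_rewrite 2 [← mul_one (((μ.map (ξ 0)) {k}).toReal)]
      exact mul_le_mul_of_nonneg_left
        (Real.exp_le_one_iff.mpr (mul_nonpos_of_nonpos_of_nonneg (by linarith) (by positivity)))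
        ENNReal.toReal_nonneg
    have hsummf : Summable (fun k : ℕ => ((μ.map (ξ 0)) {k}).toReal • Real.exp (-lam * k)) :=
      Summable.of_nonneg_of_le (fun k => by positivity) hptle hsummReal
    rw [tsum_eq_zero_add' ((summable_nat_add_iff 1).mpr hsummf)]
    have hf0 : ((μ.map (ξ 0)) {(0:ℕ)}).toReal • Real.exp (-lam * ((0:ℕ):ℝ)) = 0 := by
      rw [hν0]; simp
    rw [hf0, zero_add]
    have heqterm : ∀ k : ℕ, ((μ.map (ξ 0)) {(k + 1 : ℕ)}).toReal • Real.exp (-lam * ((k+1 : ℕ):ℝ))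
        = (1 - α) ^ k * α * Real.exp (-lam * ((k:ℝ) + 1)) := by
      intro k
      rw [smul_eq_mul, hνk, hdist (k+1) (by omega), Nat.add_sub_cancel]
      push_cast
      ring
    rw [tsum_congr heqterm, hCdef]
    exact geom_series_bound hα0 hα1 hlam0.le
  -- the sum variable
  set Sf : Ω → ℝ := ∑ i ∈ Finset.range n, X i with hSfdef
  have hSapp : ∀ ω, Sf ω = ∑ i ∈ Finset.range n, (ξ i ω : ℝ) := by
    intro ω; rw [hSfdef, Finset.sum_apply]
  have hSmeas : Measurable Sf := by
    have h : Sf = fun ω => ∑ i ∈ Finset.range n, X i ω := funext fun ω => Finset.sum_apply _ _ _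
    rw [h]; exact Finset.measurable_sum _ fun i _ => hXmeas i
  have hintS : Integrable (fun ω => Real.exp (-lam * Sf ω)) μ := by
    refine Integrable.mono' (integrable_const 1)
      ((hSmeas.const_mul (-lam)).exp).aestronglyMeasurable ?_
    refine Filter.Eventually.of_forall fun ω => ?_
    rw [Real.norm_eq_abs, abs_of_pos (Real.exp_pos _)]
    refine Real.exp_le_one_iff.mpr (mul_nonpos_of_nonpos_of_nonneg (by linarith) ?_)
    rw [hSapp]; positivity
  have hchern := measure_le_le_exp_mul_mgf (μ := μ) (X := Sf) ((n:ℝ)/α - n*x)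
    (neg_nonpos.mpr hlam0.le) hintS
  have hn0 : (0:ℝ) < n := by exact_mod_cast Nat.lt_of_lt_of_le Nat.zero_lt_one hn
  have hsub : {ω | (∑ i ∈ Finset.range n, (ξ i ω : ℝ)) / n - 1/α < -x}
      ⊆ {ω | Sf ω ≤ (n:ℝ)/α - n*x} := by
    intro ω hω
    simp only [Set.mem_setOf_eq] at hω ⊢
    rw [hSapp]
    have h1 : (∑ i ∈ Finset.range n, (ξ i ω : ℝ)) / n < 1/α - x := by linarith
    have h2 := (div_lt_iff₀ hn0).mp h1
    have h3 : (1 / α - x) * (n:ℝ) = (n:ℝ)/α - n*x := by ring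
    linarith
  have hmono : (μ {ω | (∑ i ∈ Finset.range n, (ξ i ω : ℝ)) / n - 1/α < -x}).toReal
      ≤ (μ {ω | Sf ω ≤ (n:ℝ)/α - n*x}).toReal :=
    ENNReal.toReal_mono (measure_ne_top μ _) (measure_mono hsub)
  refine le_trans (hmono.trans hchern) ?_
  have hprod : mgf Sf μ (-lam) = mgf (X 0) μ (-lam) ^ n := by
    rw [hSfdef, hXindep.mgf_sum hXmeas,
      Finset.prod_congr rfl fun i _ => by rw [hmgf_int i, ← hmgf_int 0],
      Finset.prod_const, Finset.card_range]
  rw [hprod]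
  have hpow : mgf (X 0) μ (-lam) ^ n ≤ (Real.exp (-(lam/α) + lam^2 * C / 2)) ^ n :=
    pow_le_pow_left₀ mgf_nonneg hmgf0 n
  calc Real.exp (-(-lam) * ((n:ℝ)/α - n*x)) * mgf (X 0) μ (-lam) ^ n
      ≤ Real.exp (-(-lam) * ((n:ℝ)/α - n*x)) * (Real.exp (-(lam/α) + lam^2 * C / 2)) ^ n :=
        mul_le_mul_of_nonneg_left hpow (Real.exp_pos _).le
    _ = Real.exp ((n:ℝ) * (lam^2 * C / 2 - lam * x)) := by
        rw [← Real.exp_nat_mul, ← Real.exp_add]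
        congr 1
        field_simp
        ring
    _ ≤ Real.exp (-(n * min (x ^ 2 / (2 * C)) (x / 2))) := by
        apply Real.exp_le_exp.mpr
        have hmle : lam^2 * C / 2 - lam * x ≤ -(min (x ^ 2 / (2 * C)) (x / 2)) := by
          rcases le_total x C with hxc | hxc
          · have hlameq : lam = x / C := by
              rw [hlamdef]; exact min_eq_left ((div_le_one hC0).mpr hxc)
            have hmin : min (x ^ 2 / (2 * C)) (x / 2) ≤ x ^ 2 / (2 * C) := min_le_left _ _
            have heq : (x/C)^2 * C / 2 - (x/C) * x = -(x ^ 2 / (2 * C)) := by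
              field_simp; ring
            rw [hlameq, heq]
            linarith
          · have hlameq : lam = 1 := by
              rw [hlamdef]; exact min_eq_right ((one_le_div hC0).mpr hxc)
            have hmin : min (x ^ 2 / (2 * C)) (x / 2) ≤ x / 2 := min_le_right _ _
            have heq1 : (1:ℝ)^2 * C / 2 - 1 * x = C/2 - x := by ring
            rw [hlameq, heq1]
            calc C/2 - x ≤ -(x/2) := by linarith
              _ ≤ -(min (x ^ 2 / (2 * C)) (x / 2)) := neg_le_neg hmin
        calc (n:ℝ) * (lam^2 * C / 2 - lam * x)
            ≤ (n:ℝ) * (-(min (x ^ 2 / (2 * C)) (x / 2))) :=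
              mul_le_mul_of_nonneg_left hmle hn0.le
          _ = -((n:ℝ) * min (x ^ 2 / (2 * C)) (x / 2)) := by ring
end

section
/- Let $k\in\mathbb{N}^{*}$, $\alpha\in(0,1)$, $n=\lfloor k\alpha/2\rfloor \ge 1$, $x = k/(2n) \ge 1/\alpha$, and let $\xi_1,\ldots,\xi_n$ be i.i.d. geometric random variables of parameter $\alpha$. Define $u_k = n\,\mathbb{P}\left(\left|\sum_{j=1}^{n}\xi_j - \frac{n}{\alpha}\right| > nx\right)$ and $C_{3,\alpha} = \frac{\alpha}{4(1-\alpha)(4-3\alpha)} \wedge \frac14\ln\left(\frac{2-\alpha}{2(1-\alpha)}\wedge 2\right)$. Then for every $\epsilon>0$ there exists $k(\epsilon)$ such that for all $k > k(\epsilon)$, $u_k \le \alpha\, e^{-k(C_{3,\alpha}-\epsilon)}$. -/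
open MeasureTheory ProbabilityTheory Real
open scoped ENNReal NNReal
set_option maxHeartbeats 1000000

-- log(1+x) ≥ 2x/(2+x) for x ≥ 0
lemma log_ge_pade {x : ℝ} (hx : 0 ≤ x) : 2*x/(2+x) ≤ Real.log (1+x) := by
  have h2x : (0:ℝ) < 2 + x := by linarith
  have h1x : (0:ℝ) < 1 + x := by linarith
  set f : ℝ → ℝ := fun y => Real.log (1+y) - 2*y/(2+y) with hf
  have hderiv : ∀ y ∈ Set.Ici (0:ℝ), HasDerivAt f (1/(1+y) - 4/(2+y)^2) y := by
    intro y hy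
    have hy0 : (0:ℝ) ≤ y := hy
    have h1 : HasDerivAt (fun y : ℝ => Real.log (1+y)) (1/(1+y)) y := by
      have := ((hasDerivAt_id y).const_add 1).log (by positivity)
      simpa using this
    have h2 : HasDerivAt (fun y : ℝ => 2*y/(2+y)) (4/(2+y)^2) y := by
      have hnum : HasDerivAt (fun y : ℝ => 2*y) 2 y := by
        simpa using (hasDerivAt_id y).const_mul 2
      have hden : HasDerivAt (fun y : ℝ => 2+y) 1 y := by
        simpa using (hasDerivAt_id y).const_add 2
      have := hnum.div hden (by positivity)
      exact this.congr_deriv (by ring)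
    exact h1.sub h2
  have hmono : MonotoneOn f (Set.Ici 0) := by
    apply monotoneOn_of_deriv_nonneg (convex_Ici 0)
    · exact ContinuousOn.sub
        (Real.continuousOn_log.comp (by fun_prop) (by intro y hy; simp at hy ⊢; intro h; nlinarith))
        (ContinuousOn.div (by fun_prop) (by fun_prop) (by intro y hy; simp at hy; positivity))
    · intro y hy
      simp only [interior_Ici] at hy
      exact (hderiv y (Set.mem_Ici.mpr (le_of_lt hy))).differentiableAt.differentiableWithinAt
    · intro y hy
      simp only [interior_Ici] at hy
      have hy' : (0:ℝ) < y := hy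
      rw [(hderiv y (Set.mem_Ici.mpr hy'.le)).deriv]
      rw [sub_nonneg, div_le_div_iff₀ (by positivity) (by positivity)]
      nlinarith
  have := hmono (Set.self_mem_Ici) (hx) hx
  simp [hf] at this
  linarith [this]

lemma geom_core {Ω : Type*} [MeasurableSpace Ω] (μ : Measure Ω) [IsProbabilityMeasure μ]
    {α : ℝ} (ha : 0 < α) (hb : α < 1) {X : Ω → ℕ} (hX : Measurable X)
    (hdist : ∀ k : ℕ, 1 ≤ k → (μ {ω | X ω = k}).toReal = (1 - α) ^ (k - 1) * α)
    {β : ℝ} (hβ : β = (2 - α) / (2 * (1 - α))) :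
    Integrable (fun ω => Real.exp (Real.log β * (X ω : ℝ))) μ ∧
      ∫ ω, Real.exp (Real.log β * (X ω : ℝ)) ∂μ = 2 * β := by
  have h1a : (0:ℝ) < 1 - α := by linarith
  have hβpos : 0 < β := by rw [hβ]; exact div_pos (by linarith) (by linarith)
  have hr : (1 - α) * β = 1 - α / 2 := by rw [hβ]; field_simp
  have hr0 : (0:ℝ) ≤ (1 - α) * β := by positivity
  have hr1 : (1 - α) * β < 1 := by rw [hr]; linarith
  set ν : Measure ℕ := μ.map X with hν
  have : IsProbabilityMeasure ν := Measure.isProbabilityMeasure_map hX.aemeasurable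
  have hνm : ∀ m : ℕ, ν {m} = μ {ω | X ω = m} := by
    intro m
    rw [hν, Measure.map_apply hX (measurableSet_singleton m)]
    rfl
  have hfin : ∀ m : ℕ, ν {m} ≠ ⊤ := fun m => measure_ne_top ν _
  have hp : ∀ m : ℕ, ν {(m+1 : ℕ)} = ENNReal.ofReal ((1-α)^m * α) := by
    intro m
    have h := hdist (m+1) (by omega)
    simp only [Nat.add_sub_cancel] at h
    rw [← ENNReal.ofReal_toReal (hfin (m+1)), hνm, h]
  have hsum_geo : ∑' m : ℕ, (1-α)^m * α = 1 := by
    rw [tsum_mul_right, tsum_geometric_of_lt_one (by linarith) (by linarith)]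
    field_simp
    rw [sub_sub_cancel, div_self ha.ne']
  have h0 : ν {(0:ℕ)} = 0 := by
    have huniv : (Set.univ : Set ℕ) = ⋃ m : ℕ, {m} := by ext m; simp
    have hdisj : Pairwise (Function.onFun Disjoint (fun m : ℕ => ({m} : Set ℕ))) :=
      fun m n hmn => by simp [Function.onFun, hmn]
    have hU := measure_iUnion (μ := ν) hdisj (fun m : ℕ => measurableSet_singleton m)
    rw [← huniv, measure_univ] at hU
    have h1 : (1 : ℝ≥0∞) = ∑' m : ℕ, ν {m} := hU
    have h2 : ∑' m : ℕ, ν {m} = ν {(0:ℕ)} + ∑' m : ℕ, ν {(m+1 : ℕ)} :=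
      tsum_eq_zero_add' ENNReal.summable
    have h3 : ∑' m : ℕ, ν {(m+1 : ℕ)} = 1 := by
      rw [tsum_congr hp, ← ENNReal.ofReal_tsum_of_nonneg (fun m => by positivity)
        (by
          apply Summable.mul_right
          exact summable_geometric_of_lt_one (by linarith) (by linarith)), hsum_geo]
      simp
    rw [h2, h3] at h1
    have : ν {(0:ℕ)} + 1 = 0 + 1 := by rw [← h1]; simp
    exact (ENNReal.add_left_inj ENNReal.one_ne_top).mp this
  have hexp : ∀ m : ℕ, Real.exp (Real.log β * (m : ℝ)) = β ^ m := by
    intro m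
    rw [mul_comm, Real.exp_nat_mul, Real.exp_log hβpos]
  have hcsum : Summable (fun m : ℕ => (ν {m}).toReal * β ^ m) := by
    rw [← summable_nat_add_iff 1]
    apply Summable.congr (f := fun m : ℕ => (α * β) * ((1-α)*β) ^ m)
    · exact (summable_geometric_of_lt_one hr0 hr1).mul_left _
    · intro m
      rw [hp, ENNReal.toReal_ofReal (by positivity), mul_pow]
      ring
  have hint : Integrable (fun m : ℕ => β ^ m) ν := by
    constructor
    · exact (measurable_from_top).aestronglyMeasurable
    · rw [hasFiniteIntegral_iff_norm, lintegral_countable']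
      have : ∀ m : ℕ, ENNReal.ofReal ‖β ^ m‖ * ν {m} = ENNReal.ofReal ((ν {m}).toReal * β ^ m) := by
        intro m
        rw [Real.norm_of_nonneg (by positivity), ← ENNReal.ofReal_toReal (hfin m),
          ← ENNReal.ofReal_mul (by positivity), ENNReal.toReal_ofReal (ENNReal.toReal_nonneg),
          mul_comm]
      rw [tsum_congr this, ← ENNReal.ofReal_tsum_of_nonneg
        (fun m => by positivity) hcsum]
      exact ENNReal.ofReal_lt_top
  have hval : ∫ m : ℕ, β ^ m ∂ν = 2 * β := by
    rw [integral_countable' hint]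
    simp only [smul_eq_mul]
    simp only [measureReal_def]
    rw [tsum_eq_zero_add' ((summable_nat_add_iff 1).mpr hcsum)]
    have e0 : (ν {(0:ℕ)}).toReal * β ^ 0 = 0 := by rw [h0]; simp
    have e1 : ∀ m : ℕ, (ν {(m+1:ℕ)}).toReal * β ^ (m+1) = (α * β) * ((1-α)*β) ^ m := by
      intro m
      rw [hp, ENNReal.toReal_ofReal (by positivity), mul_pow]
      ring
    rw [e0, tsum_congr e1, tsum_mul_left, tsum_geometric_of_lt_one hr0 hr1, hr]
    field_simp
    rw [zero_add, sub_sub_cancel, div_eq_iff ha.ne']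
    ring
  constructor
  · have hi := (integrable_map_measure (f := X) (g := fun m : ℕ => β ^ m)
      (measurable_from_top).aestronglyMeasurable hX.aemeasurable).mp hint
    simpa only [Function.comp_def, hexp] using hi
  · have h2 : ∫ m : ℕ, β ^ m ∂(μ.map X) = ∫ ω, β ^ (X ω) ∂μ :=
      integral_map (μ := μ) hX.aemeasurable (measurable_from_top).aestronglyMeasurable
    have h3 : ∫ ω, β ^ (X ω) ∂μ = 2 * β := by rw [← h2, ← hν]; exact hval
    rw [← h3]
    congr 1
    funext ω
    exact hexp (X ω)

lemma pade_ratio (p q : ℝ) (hq : 0 < q) (hpq : 0 < 2*q+p) :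
    2*(p/q)/(2+p/q) = 2*p/(2*q+p) := by
  rw [div_eq_div_iff (by
    intro hcon
    have : (2+p/q)*q = 0 := by rw [hcon]; ring
    rw [add_mul, div_mul_cancel₀ _ hq.ne'] at this
    linarith) hpq.ne']
  field_simp

/-- with `n = ⌊kα/2⌋`, `x = k/(2n)`, `ξ_j` i.i.d. geometric of parameter
`α ∈ (0,1)`, `u_k = n ℙ(|∑_{j=1}^n ξ_j - n/α| > nx)` and
`C₃ = min(α/(4(1-α)(4-3α)), (1/4) ln(min((2-α)/(2(1-α)), 2)))`, for every `ε > 0` there is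
`k(ε)` such that `u_k ≤ α e^{-k(C₃-ε)}` for all `k > k(ε)`. -/
theorem stmt17 {Ω : Type*} [MeasurableSpace Ω] (μ : Measure Ω) [IsProbabilityMeasure μ]
    (α : ℝ) (hα : α ∈ Set.Ioo (0 : ℝ) 1)
    (ξ : ℕ → Ω → ℕ) (hmeas : ∀ m, Measurable (ξ m))
    (hindep : iIndepFun ξ μ)
    (hident : ∀ m, IdentDistrib (ξ m) (ξ 0) μ μ)
    (hdist : ∀ k : ℕ, 1 ≤ k → (μ {ω | ξ 0 ω = k}).toReal = (1 - α) ^ (k - 1) * α) :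
    ∀ ε > (0 : ℝ), ∃ k₀ : ℕ, ∀ k : ℕ, k₀ < k →
      (⌊(k : ℝ) * α / 2⌋₊ : ℝ) *
        (μ {ω |
          (⌊(k : ℝ) * α / 2⌋₊ : ℝ) * ((k : ℝ) / (2 * (⌊(k : ℝ) * α / 2⌋₊ : ℝ))) <
            |(∑ j ∈ Finset.range ⌊(k : ℝ) * α / 2⌋₊, (ξ j ω : ℝ)) -
              (⌊(k : ℝ) * α / 2⌋₊ : ℝ) / α|}).toReal ≤
      α * Real.exp (-(k * (min (α / (4 * (1 - α) * (4 - 3 * α)))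
        (Real.log (min ((2 - α) / (2 * (1 - α))) 2) / 4) - ε))) := by
  obtain ⟨ha, hb⟩ := hα
  have h1a : (0:ℝ) < 1 - α := by linarith
  set β : ℝ := (2 - α) / (2 * (1 - α)) with hβ
  have hβpos : 0 < β := div_pos (by linarith) (by linarith)
  have hβ1 : 1 ≤ β := by
    rw [hβ, le_div_iff₀ (by linarith)]
    linarith
  set t : ℝ := Real.log β with htdef
  have ht0 : 0 ≤ t := Real.log_nonneg hβ1
  set L2 : ℝ := Real.log 2 with hL2def
  have hL2pos : 0 < L2 := Real.log_pos one_lt_two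
  have hlog2 : L2 < 0.6931471808 := Real.log_two_lt_d9
  have hexpt : Real.exp t = β := Real.exp_log hβpos
  have hexp2t : Real.exp (L2 + t) = 2 * β := by
    rw [Real.exp_add, hexpt, hL2def, Real.exp_log two_pos]
  set X : ℕ → Ω → ℝ := fun j ω => (ξ j ω : ℝ) with hXdef
  have hXmeas : ∀ j, Measurable (X j) := fun j => measurable_from_top.comp (hmeas j)
  have hXindep : iIndepFun X μ :=
    hindep.comp (fun _ => (Nat.cast : ℕ → ℝ)) (fun _ => measurable_from_top)
  have hcore := geom_core μ ha hb (hmeas 0) hdist hβ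
  have hInt0 : Integrable (fun ω => Real.exp (t * X 0 ω)) μ := hcore.1
  have hval0 : ∫ ω, Real.exp (t * X 0 ω) ∂μ = 2 * β := hcore.2
  have hidj : ∀ j, IdentDistrib (fun ω => Real.exp (t * X j ω))
      (fun ω => Real.exp (t * X 0 ω)) μ μ := by
    intro j
    have h1 : IdentDistrib (X j) (X 0) μ μ := (hident j).comp measurable_from_top
    exact h1.comp ((measurable_id.const_mul t).exp)
  have hIntj : ∀ j, Integrable (fun ω => Real.exp (t * X j ω)) μ :=
    fun j => (hidj j).integrable_iff.mpr hInt0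
  have hmgfj : ∀ j, mgf (X j) μ t = 2 * β := by
    intro j
    rw [mgf, (hidj j).integral_eq]
    exact hval0
  set g : ℝ := t - α/2 * (L2 + t) with hgdef
  have hC3g : min (α / (4 * (1 - α) * (4 - 3 * α))) (Real.log (min β 2) / 4) ≤ g := by
    refine le_trans (min_le_right _ _) ?_
    rcases le_total β 2 with hcase | hcase
    · rw [min_eq_left hcase]
      have hα23 : 3 * α ≤ 2 := by
        rw [hβ, div_le_iff₀ (by linarith)] at hcase
        linarith
      have h43 : (0:ℝ) < 4 - 3*α := by linarith
      have hxnn : (0:ℝ) ≤ α/(2*(1-α)) := div_nonneg ha.le (by linarith)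
      have hxval : (1 : ℝ) + α/(2*(1-α)) = β := by rw [hβ]; field_simp; ring
      have hpade := log_ge_pade hxnn
      rw [hxval] at hpade
      have hratio : 2*(α/(2*(1-α)))/(2+α/(2*(1-α))) = 2*α/(4-3*α) := by
        rw [pade_ratio α (2*(1-α)) (by linarith) (by linarith)]
        congr 1
        ring
      rw [hratio] at hpade
      have hu : 2*α ≤ t * (4 - 3*α) := by
        rw [← div_le_iff₀ h43]; exact hpade
      have key : L2 * (4 - 3*α) ≤ 3 - 2*α := by nlinarith
      have hg4 : t/4 ≤ g := by
        rw [hgdef]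
        nlinarith [mul_le_mul_of_nonneg_right hu hL2pos.le,
          mul_le_mul_of_nonneg_left key ht0]
      exact le_trans (le_of_eq (by rw [htdef])) hg4
    · rw [min_eq_right hcase]
      have htL2 : L2 ≤ t := Real.log_le_log two_pos hcase
      rcases le_total α (3/4) with hα34 | hα34
      · rw [hgdef]
        nlinarith [mul_le_mul_of_nonneg_left htL2 (show (0:ℝ) ≤ 1 - α/2 by linarith),
          mul_nonneg (show (0:ℝ) ≤ 3/4 - α by linarith) hL2pos.le]
      · have h32 : (0:ℝ) ≤ 3*α - 2 := by linarith
        have h65 : (0:ℝ) < 6 - 5*α := by linarith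
        have hynn : (0:ℝ) ≤ (3*α-2)/(4*(1-α)) := div_nonneg h32 (by linarith)
        have hyval : (1:ℝ) + (3*α-2)/(4*(1-α)) = β/2 := by rw [hβ]; field_simp; ring
        have hpade := log_ge_pade hynn
        rw [hyval] at hpade
        have hloghalf : Real.log (β/2) = t - L2 := by
          rw [Real.log_div (by positivity) (by norm_num), htdef, hL2def]
        rw [hloghalf] at hpade
        have hratio : 2*((3*α-2)/(4*(1-α)))/(2+(3*α-2)/(4*(1-α))) = 2*(3*α-2)/(6-5*α) := by
          rw [pade_ratio (3*α-2) (4*(1-α)) (by linarith) (by linarith)]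
          congr 1
          ring
        rw [hratio] at hpade
        have hs' : 2*(3*α-2) ≤ (t - L2) * (6-5*α) := by
          rw [← div_le_iff₀ h65]; exact hpade
        have hL21 : L2 ≤ 1 := by linarith
        have e1 : (2-α)*(2*(3*α-2)) ≤ (2-α)*((t - L2) * (6-5*α)) :=
          mul_le_mul_of_nonneg_left hs' (by linarith)
        rw [hgdef]
        nlinarith [e1, mul_le_mul_of_nonneg_left hL21
          (show (0:ℝ) ≤ (α - 3/4)*(6-5*α) by nlinarith), sq_nonneg (2*α - 7/8),
          mul_nonneg (mul_nonneg (show (0:ℝ) ≤ 2-α by linarith) (sub_nonneg.mpr htL2)) h65.le]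
  intro ε hε
  have hconst : 0 < α * Real.exp (-(t/α)) := by positivity
  have htend : Filter.Tendsto (fun y : ℝ => y * Real.exp (-(ε*y))) Filter.atTop (nhds 0) := by
    have h1 : Filter.Tendsto (fun x:ℝ => x * Real.exp (-x)) Filter.atTop (nhds 0) := by
      simpa using Real.tendsto_pow_mul_exp_neg_atTop_nhds_zero 1
    have h2 : Filter.Tendsto (fun y:ℝ => ε * y) Filter.atTop Filter.atTop :=
      Filter.Tendsto.const_mul_atTop hε Filter.tendsto_id
    have h3 := (h1.comp h2).const_mul (1/ε)
    simp only [mul_zero] at h3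
    refine Filter.Tendsto.congr ?_ h3
    intro y
    simp only [Function.comp]
    field_simp
  have htendN : Filter.Tendsto (fun k : ℕ => (k:ℝ) * Real.exp (-(ε*k))) Filter.atTop (nhds 0) :=
    htend.comp tendsto_natCast_atTop_atTop
  have hev : ∀ᶠ k : ℕ in Filter.atTop,
      ((2:ℝ)/α < k ∧ (k:ℝ) * Real.exp (-(ε*k)) ≤ α * Real.exp (-(t/α))) := by
    filter_upwards [tendsto_natCast_atTop_atTop.eventually_gt_atTop (2/α),
      htendN.eventually_lt_const hconst] with k h1 h2
    exact ⟨h1, h2.le⟩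
  obtain ⟨k₀, hk₀⟩ := Filter.eventually_atTop.mp hev
  refine ⟨k₀, fun k hk => ?_⟩
  obtain ⟨hk1, hk2⟩ := hk₀ k hk.le
  set n : ℕ := ⌊(k : ℝ) * α / 2⌋₊ with hn
  have hkpos : (0:ℝ) < k := lt_trans (by positivity) hk1
  have hkα : (1:ℝ) ≤ (k:ℝ) * α / 2 := by
    rw [div_lt_iff₀ ha] at hk1
    linarith
  have hn1 : 1 ≤ n := Nat.le_floor (by exact_mod_cast hkα)
  have hnR1 : (1:ℝ) ≤ (n:ℝ) := by exact_mod_cast hn1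
  have hnRpos : (0:ℝ) < n := by linarith
  have hnup : (n:ℝ) ≤ (k:ℝ)*α/2 := Nat.floor_le (by positivity)
  have hnlow : (k:ℝ)*α/2 - 1 ≤ (n:ℝ) := by
    have := Nat.lt_floor_add_one ((k:ℝ)*α/2)
    rw [← hn] at this
    linarith
  set a : ℝ := (n:ℝ)/α + (k:ℝ)/2 with hadef
  have hIntS : Integrable (fun ω => Real.exp (t * (∑ j ∈ Finset.range n, X j) ω)) μ :=
    hXindep.integrable_exp_mul_sum hXmeas (fun j _ => hIntj j)
  have hchern : (μ {ω | a ≤ (∑ j ∈ Finset.range n, X j) ω}).toReal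
      ≤ Real.exp (-t*a) * mgf (∑ j ∈ Finset.range n, X j) μ t :=
    measure_ge_le_exp_mul_mgf a ht0 hIntS
  have hmgfS : mgf (∑ j ∈ Finset.range n, X j) μ t = (2*β)^n := by
    rw [hXindep.mgf_sum hXmeas]
    rw [Finset.prod_congr rfl (fun j _ => hmgfj j), Finset.prod_const, Finset.card_range]
  rw [hmgfS] at hchern
  have hsub : {ω | (n:ℝ) * ((k:ℝ)/(2*(n:ℝ))) <
        |(∑ j ∈ Finset.range n, (ξ j ω : ℝ)) - (n:ℝ)/α|}
      ⊆ {ω | a ≤ (∑ j ∈ Finset.range n, X j) ω} := by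
    intro ω hω
    simp only [Set.mem_setOf_eq] at hω ⊢
    have hks : (n:ℝ) * ((k:ℝ)/(2*(n:ℝ))) = (k:ℝ)/2 := by
      field_simp
    rw [hks] at hω
    have hSapp : (∑ j ∈ Finset.range n, X j) ω = ∑ j ∈ Finset.range n, (ξ j ω : ℝ) := by
      simp [hXdef]
    rw [hSapp]
    have hS0 : (0:ℝ) ≤ ∑ j ∈ Finset.range n, (ξ j ω : ℝ) :=
      Finset.sum_nonneg (fun j _ => by positivity)
    have hna : (n:ℝ)/α ≤ (k:ℝ)/2 := by
      rw [div_le_div_iff₀ ha two_pos]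
      linarith
    rcases lt_abs.mp hω with h | h
    · rw [hadef]; linarith
    · exfalso; linarith
  have htail : (μ {ω | (n:ℝ) * ((k:ℝ)/(2*(n:ℝ))) <
        |(∑ j ∈ Finset.range n, (ξ j ω : ℝ)) - (n:ℝ)/α|}).toReal
      ≤ Real.exp (-t*a) * (2*β)^n :=
    le_trans (ENNReal.toReal_mono (measure_ne_top _ _) (measure_mono hsub)) hchern
  -- numeric chain
  have hpow : (2*β)^n = Real.exp ((n:ℝ)*(L2+t)) := by
    rw [Real.exp_nat_mul, hexp2t]
  have hL2t : (0:ℝ) ≤ L2 + t := by linarith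
  have key1 : -t*a + (n:ℝ)*(L2+t) ≤ -(k:ℝ)*g + t/α := by
    have e5 : t*((k:ℝ)*α/2 - 1) ≤ t*(n:ℝ) := mul_le_mul_of_nonneg_left hnlow ht0
    have e6 : (n:ℝ)*(L2+t) ≤ ((k:ℝ)*α/2)*(L2+t) := mul_le_mul_of_nonneg_right hnup hL2t
    have hainv : (0:ℝ) ≤ α⁻¹ := inv_nonneg.mpr ha.le
    have e7 : -(t*(n:ℝ)) * α⁻¹ ≤ -(t*((k:ℝ)*α/2 - 1)) * α⁻¹ :=
      mul_le_mul_of_nonneg_right (by linarith) hainv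
    have e8 : -(t*((k:ℝ)*α/2 - 1)) * α⁻¹ = -t*(k:ℝ)/2 + t*α⁻¹ := by
      field_simp
      ring
    have e9 : -t*a = -(t*(n:ℝ))*α⁻¹ - t*(k:ℝ)/2 := by
      rw [hadef]
      field_simp
      ring
    have e10 : t/α = t*α⁻¹ := div_eq_mul_inv t α
    rw [e9, e10, hgdef]
    nlinarith [e7, e8, e6]
  have hnk : (n:ℝ) ≤ (k:ℝ) := by nlinarith
  have hgC3 : -(k:ℝ)*g ≤ -(k:ℝ)*(min (α / (4 * (1 - α) * (4 - 3 * α)))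
      (Real.log (min β 2) / 4)) := by
    have := mul_le_mul_of_nonneg_left hC3g hkpos.le
    nlinarith [this]
  have hh1 : Real.exp (-(ε*(k:ℝ))) * Real.exp (ε*(k:ℝ) + t/α) = Real.exp (t/α) := by
    rw [← Real.exp_add]; congr 1; ring
  have hh2 : Real.exp (-(t/α)) * Real.exp (ε*(k:ℝ) + t/α) = Real.exp (ε*(k:ℝ)) := by
    rw [← Real.exp_add]; congr 1; ring
  have step2 : (k:ℝ)*Real.exp (t/α) ≤ α*Real.exp (ε*(k:ℝ)) := by
    calc (k:ℝ)*Real.exp (t/α) = (k:ℝ)*Real.exp (-(ε*(k:ℝ)))*Real.exp (ε*(k:ℝ) + t/α) := by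
          rw [mul_assoc, hh1]
      _ ≤ α*Real.exp (-(t/α))*Real.exp (ε*(k:ℝ) + t/α) :=
          mul_le_mul_of_nonneg_right hk2 (Real.exp_pos _).le
      _ = α*Real.exp (ε*(k:ℝ)) := by rw [mul_assoc, hh2]
  set C3 : ℝ := min (α / (4 * (1 - α) * (4 - 3 * α))) (Real.log (min β 2) / 4) with hC3
  calc (n:ℝ) * (μ {ω | (n:ℝ) * ((k:ℝ)/(2*(n:ℝ))) <
        |(∑ j ∈ Finset.range n, (ξ j ω : ℝ)) - (n:ℝ)/α|}).toReal
      ≤ (n:ℝ) * (Real.exp (-t*a) * (2*β)^n) :=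
        mul_le_mul_of_nonneg_left htail hnRpos.le
    _ = (n:ℝ) * Real.exp (-t*a + (n:ℝ)*(L2+t)) := by
        rw [hpow, ← Real.exp_add]
    _ ≤ (k:ℝ) * Real.exp (-(k:ℝ)*g + t/α) :=
        mul_le_mul hnk (Real.exp_le_exp.mpr key1) (Real.exp_pos _).le hkpos.le
    _ ≤ (k:ℝ) * Real.exp (-(k:ℝ)*C3 + t/α) :=
        mul_le_mul_of_nonneg_left (Real.exp_le_exp.mpr (add_le_add_left hgC3 (t/α))) hkpos.le
    _ = ((k:ℝ) * Real.exp (t/α)) * Real.exp (-(k:ℝ)*C3) := by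
        rw [Real.exp_add]; ring
    _ ≤ (α*Real.exp (ε*(k:ℝ))) * Real.exp (-(k:ℝ)*C3) :=
        mul_le_mul_of_nonneg_right step2 (Real.exp_pos _).le
    _ = α * Real.exp (-((k:ℝ) * (C3 - ε))) := by
        rw [mul_assoc, ← Real.exp_add]
        congr 2
        ring
end
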